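/- Let H : ℝ³ × ℝ × ℝ³ → ℝ be smooth, and let p : ℝ³×ℝ → ℝ³, ρ : ℝ³×ℝ → ℝ, χ : ℝ³×ℝ → ℝ be smooth fields; set v := (∂H/∂p)(p,ρ,∇ρ). Suppose that at every (x,t): (i) ∂_tρ + ∇·(vρ) = 0; (ii) ∂_tχ + v·∇χ = ∂H/∂ρ − ∇·(∂H/∂g); and (iii) ∂_t p + ∇·(v ⊗ p) + (∇v)·p = −∂_t(ρ∇χ) − ∇·(ρ v ⊗ ∇χ) − ρ (∇v)·∇χ, where all derivatives of H are evaluated at (p,ρ,∇ρ). Then the momentum-form LBEP equation holds at every (x,t): ∂_t p + ∇·( (∂H/∂p) ⊗ p + (∂H/∂g) ⊗ ∇ρ ) = −∇( ρ ∂H/∂ρ − ρ ∇·(∂H/∂g) + p·(∂H/∂p) − H ). -/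

import Mathlib

/-!
Statement 6: If the fields `(p, ρ, χ)` with `v := ∂H/∂p` satisfy the continuity equation,
the `χ` equation, and the `h`-variation equation (iii), then the momentum-form LBEP
equation holds.
-/

noncomputable section

abbrev V3 : Type := Fin 3 → ℝ

/-- Spacetime `(x, t) ∈ ℝ³ × ℝ`. -/
abbrev SpT : Type := V3 × ℝ

/-- Time derivative of a scalar spacetime field. -/
def pdt (f : SpT → ℝ) (z : SpT) : ℝ := fderiv ℝ f z (0, 1)

/-- Spatial partial derivative `∂_i`. -/
def pdx (f : SpT → ℝ) (i : Fin 3) (z : SpT) : ℝ := fderiv ℝ f z (Pi.single i 1, 0)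

/-- Spatial gradient. -/
def gradx (f : SpT → ℝ) (z : SpT) : V3 := fun i => pdx f i z

/-- Spatial divergence of a vector field. -/
def divx (w : SpT → V3) (z : SpT) : ℝ := ∑ i, pdx (fun z' => w z' i) i z

/-- Spatial divergence of a matrix field, `(∇·T)_j = Σ_i ∂_i T_{ij}`. -/
def divMat (T : SpT → Fin 3 → Fin 3 → ℝ) (z : SpT) (j : Fin 3) : ℝ :=
  ∑ i, pdx (fun z' => T z' i j) i z

/-- `∂H/∂p`. -/
def dHdp (H : V3 × ℝ × V3 → ℝ) (q : V3 × ℝ × V3) : V3 :=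
  fun i => fderiv ℝ H q (Pi.single i 1, 0, 0)

/-- `∂H/∂ρ`. -/
def dHdrho (H : V3 × ℝ × V3 → ℝ) (q : V3 × ℝ × V3) : ℝ :=
  fderiv ℝ H q (0, 1, 0)

/-- `∂H/∂g`. -/
def dHdg (H : V3 × ℝ × V3 → ℝ) (q : V3 × ℝ × V3) : V3 :=
  fun i => fderiv ℝ H q (0, 0, Pi.single i 1)


-- ===== auxiliary infrastructure =====

def Xi (i : Fin 3) : SpT := (Pi.single i 1, (0:ℝ))
def Tt : SpT := (0, 1)

lemma contDiff_pd {f : SpT → ℝ} (hf : ContDiff ℝ (⊤ : ℕ∞) f) (w : SpT) :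
    ContDiff ℝ (⊤ : ℕ∞) (fun z => fderiv ℝ f z w) :=
  (hf.fderiv_right (by simp)).clm_apply contDiff_const

lemma smooth_gradx (ρ : SpT → ℝ) (hρ : ContDiff ℝ (⊤ : ℕ∞) ρ) : ContDiff ℝ (⊤ : ℕ∞) (gradx ρ) :=
  contDiff_pi.mpr fun i => contDiff_pd hρ (Xi i)

lemma smooth_F (p : SpT → V3) (ρ : SpT → ℝ) (hp : ContDiff ℝ (⊤ : ℕ∞) p) (hρ : ContDiff ℝ (⊤ : ℕ∞) ρ) :
    ContDiff ℝ (⊤ : ℕ∞) (fun z => (p z, ρ z, gradx ρ z)) :=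
  hp.prodMk (hρ.prodMk (smooth_gradx ρ hρ))

lemma smooth_comp {G : V3 × ℝ × V3 → ℝ} (hG : ContDiff ℝ (⊤ : ℕ∞) G)
    {p : SpT → V3} {ρ : SpT → ℝ} (hp : ContDiff ℝ (⊤ : ℕ∞) p) (hρ : ContDiff ℝ (⊤ : ℕ∞) ρ) :
    ContDiff ℝ (⊤ : ℕ∞) (fun z => G (p z, ρ z, gradx ρ z)) :=
  hG.comp (smooth_F p ρ hp hρ)

lemma smooth_dHdp {H : V3 × ℝ × V3 → ℝ} (hH : ContDiff ℝ (⊤ : ℕ∞) H) (i : Fin 3) :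
    ContDiff ℝ (⊤ : ℕ∞) (fun q => dHdp H q i) :=
  (hH.fderiv_right (by simp)).clm_apply contDiff_const

lemma smooth_dHdrho {H : V3 × ℝ × V3 → ℝ} (hH : ContDiff ℝ (⊤ : ℕ∞) H) :
    ContDiff ℝ (⊤ : ℕ∞) (dHdrho H) :=
  (hH.fderiv_right (by simp)).clm_apply contDiff_const

lemma smooth_dHdg {H : V3 × ℝ × V3 → ℝ} (hH : ContDiff ℝ (⊤ : ℕ∞) H) (i : Fin 3) :
    ContDiff ℝ (⊤ : ℕ∞) (fun q => dHdg H q i) :=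
  (hH.fderiv_right (by simp)).clm_apply contDiff_const

lemma pd_mul {f g : SpT → ℝ} (hf : ContDiff ℝ (⊤ : ℕ∞) f) (hg : ContDiff ℝ (⊤ : ℕ∞) g) (z w : SpT) :
    fderiv ℝ (fun z' => f z' * g z') z w = f z * fderiv ℝ g z w + g z * fderiv ℝ f z w := by
  rw [fderiv_fun_mul (hf.differentiable (by simp) z) (hg.differentiable (by simp) z)]
  simp [mul_comm]

lemma pd_add {f g : SpT → ℝ} (hf : ContDiff ℝ (⊤ : ℕ∞) f) (hg : ContDiff ℝ (⊤ : ℕ∞) g) (z w : SpT) :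
    fderiv ℝ (fun z' => f z' + g z') z w = fderiv ℝ f z w + fderiv ℝ g z w := by
  rw [fderiv_fun_add (hf.differentiable (by simp) z) (hg.differentiable (by simp) z)]; simp

lemma pd_sub {f g : SpT → ℝ} (hf : ContDiff ℝ (⊤ : ℕ∞) f) (hg : ContDiff ℝ (⊤ : ℕ∞) g) (z w : SpT) :
    fderiv ℝ (fun z' => f z' - g z') z w = fderiv ℝ f z w - fderiv ℝ g z w := by
  rw [fderiv_fun_sub (hf.differentiable (by simp) z) (hg.differentiable (by simp) z)]; simp

lemma pd_sum {ι : Type*} (s : Finset ι) (f : ι → SpT → ℝ) (hf : ∀ i, ContDiff ℝ (⊤ : ℕ∞) (f i))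
    (z w : SpT) :
    fderiv ℝ (fun z' => ∑ i ∈ s, f i z') z w = ∑ i ∈ s, fderiv ℝ (f i) z w := by
  rw [fderiv_fun_sum (fun i _ => (hf i).differentiable (by simp) z)]; simp

lemma pd_comm {f : SpT → ℝ} (hf : ContDiff ℝ (⊤ : ℕ∞) f) (z w w' : SpT) :
    fderiv ℝ (fun z' => fderiv ℝ f z' w) z w' = fderiv ℝ (fun z' => fderiv ℝ f z' w') z w := by
  have hd : Differentiable ℝ (fderiv ℝ f) := (hf.fderiv_right (m := (⊤ : ℕ∞)) (by simp)).differentiable (by simp)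
  have key : ∀ u u' : SpT,
      fderiv ℝ (fun z' => fderiv ℝ f z' u) z u' = fderiv ℝ (fderiv ℝ f) z u' u := by
    intro u u'
    have := fderiv_clm_apply (hd z) (differentiableAt_const u)
    rw [show (fun z' => fderiv ℝ f z' u) = (fun y => (fderiv ℝ f y) ((fun _ : SpT => u) y))
      from rfl, this]
    simp
  rw [key, key]
  exact second_derivative_symmetric (fun y => (hf.differentiable (by simp) y).hasFDerivAt)
    (hd z).hasFDerivAt w' w

lemma V3_decomp (a : V3) : a = ∑ i, a i • (Pi.single i 1 : V3) := by
  funext j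
  simp [Finset.sum_apply, Pi.single_apply]

lemma clm_decomp (L : (V3 × ℝ × V3) →L[ℝ] ℝ) (a : V3) (b : ℝ) (c : V3) :
    L (a, b, c) = (∑ i, a i * L (Pi.single i 1, 0, 0)) + b * L (0, 1, 0)
      + ∑ i, c i * L (0, 0, Pi.single i 1) := by
  have h1 : ((a, b, c) : V3 × ℝ × V3)
      = (∑ i, a i • ((Pi.single i 1 : V3), (0:ℝ), (0:V3)))
        + b • ((0:V3), (1:ℝ), (0:V3))
        + ∑ i, c i • ((0:V3), (0:ℝ), (Pi.single i 1 : V3)) := by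
    refine Prod.ext ?_ (Prod.ext ?_ ?_)
    · simp [Prod.fst_sum, ← V3_decomp]
    · simp [Prod.fst_sum, Prod.snd_sum]
    · simp [Prod.snd_sum, ← V3_decomp]
  rw [h1, map_add, map_add, map_sum, map_sum, map_smul]
  simp only [map_smul, smul_eq_mul]

lemma pd_comp {H : V3 × ℝ × V3 → ℝ} (hH : ContDiff ℝ (⊤ : ℕ∞) H)
    {p : SpT → V3} {ρ : SpT → ℝ} (hp : ContDiff ℝ (⊤ : ℕ∞) p) (hρ : ContDiff ℝ (⊤ : ℕ∞) ρ)
    (z w : SpT) :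
    fderiv ℝ (fun z' => H (p z', ρ z', gradx ρ z')) z w =
      (∑ i, fderiv ℝ (fun z' => p z' i) z w * dHdp H (p z, ρ z, gradx ρ z) i)
      + fderiv ℝ ρ z w * dHdrho H (p z, ρ z, gradx ρ z)
      + ∑ i, fderiv ℝ (fun z' => fderiv ℝ ρ z' (Xi i)) z w * dHdg H (p z, ρ z, gradx ρ z) i := by
  have hg : ContDiff ℝ (⊤ : ℕ∞) (gradx ρ) := smooth_gradx ρ hρ
  have hF : ContDiff ℝ (⊤ : ℕ∞) (fun z' => (p z', ρ z', gradx ρ z')) := hp.prodMk (hρ.prodMk hg)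
  have h1 : fderiv ℝ (fun z' => H (p z', ρ z', gradx ρ z')) z =
      (fderiv ℝ H (p z, ρ z, gradx ρ z)).comp
        (fderiv ℝ (fun z' => (p z', ρ z', gradx ρ z')) z) :=
    fderiv_comp z (hH.differentiable (by simp) _) (hF.differentiable (by simp) z)
  have h2 : fderiv ℝ (fun z' => (p z', ρ z', gradx ρ z')) z =
      (fderiv ℝ p z).prod ((fderiv ℝ ρ z).prod (fderiv ℝ (gradx ρ) z)) := by
    rw [DifferentiableAt.fderiv_prodMk (hp.differentiable (by simp) z)
        ((hρ.prodMk hg).differentiable (by simp) z),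
        DifferentiableAt.fderiv_prodMk (hρ.differentiable (by simp) z) (hg.differentiable (by simp) z)]
  have h3 : ∀ k, fderiv ℝ p z w k = fderiv ℝ (fun z' => p z' k) z w := by
    intro k
    rw [show p = (fun x (i : Fin 3) => p x i) from rfl,
      fderiv_pi (fun k => ((contDiff_pi.mp hp k).differentiable (by simp) z))]
    rfl
  have h4 : ∀ k, fderiv ℝ (gradx ρ) z w k = fderiv ℝ (fun z' => fderiv ℝ ρ z' (Xi k)) z w := by
    intro k
    rw [show gradx ρ = (fun x (i : Fin 3) => fderiv ℝ ρ x (Xi i)) from rfl,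
      fderiv_pi (fun k => ((contDiff_pd hρ (Xi k)).differentiable (by simp) z))]
    rfl
  have h5 : fderiv ℝ (fun z' => H (p z', ρ z', gradx ρ z')) z w =
      fderiv ℝ H (p z, ρ z, gradx ρ z)
        (fderiv ℝ p z w, fderiv ℝ ρ z w, fderiv ℝ (gradx ρ) z w) := by
    rw [h1, h2]; rfl
  rw [h5, clm_decomp]
  simp only [h3, h4]
  rfl

lemma pdt_eq (f : SpT → ℝ) (z : SpT) : pdt f z = fderiv ℝ f z Tt := rfl
lemma pdx_eq (f : SpT → ℝ) (i : Fin 3) (z : SpT) : pdx f i z = fderiv ℝ f z (Xi i) := rfl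
lemma gradx_apply (f : SpT → ℝ) (z : SpT) (i : Fin 3) : gradx f z i = fderiv ℝ f z (Xi i) := rfl
lemma divx_eq (w : SpT → V3) (z : SpT) :
    divx w z = ∑ i, fderiv ℝ (fun z' => w z' i) z (Xi i) := rfl
lemma divMat_eq (T : SpT → Fin 3 → Fin 3 → ℝ) (z : SpT) (j : Fin 3) :
    divMat T z j = ∑ i, fderiv ℝ (fun z' => T z' i j) z (Xi i) := rfl

-- ===== end auxiliary infrastructure =====

theorem momentum_form_from_EL (H : V3 × ℝ × V3 → ℝ) (hH : ContDiff ℝ (⊤ : ℕ∞) H)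
    (p : SpT → V3) (ρ : SpT → ℝ) (χ : SpT → ℝ)
    (hp : ContDiff ℝ (⊤ : ℕ∞) p) (hρ : ContDiff ℝ (⊤ : ℕ∞) ρ) (hχ : ContDiff ℝ (⊤ : ℕ∞) χ)
    -- abbreviations: `v := ∂H/∂p (p, ρ, ∇ρ)` as a spacetime field
    (v : SpT → V3) (hv : v = fun z => dHdp H (p z, ρ z, gradx ρ z))
    -- (i) continuity equation
    (hcont : ∀ z : SpT, pdt ρ z + divx (fun z' => fun i => ρ z' * v z' i) z = 0)
    -- (ii) χ equation
    (hchi : ∀ z : SpT,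
      pdt χ z + (∑ i, v z i * pdx χ i z) =
        dHdrho H (p z, ρ z, gradx ρ z)
          - divx (fun z' => dHdg H (p z', ρ z', gradx ρ z')) z)
    -- (iii) the h-variation equation
    (hmom : ∀ (z : SpT) (j : Fin 3),
      pdt (fun z' => p z' j) z
        + divMat (fun z' => fun i j' => v z' i * p z' j') z j
        + (∑ a, pdx (fun z' => v z' a) j z * p z a) =
      - pdt (fun z' => ρ z' * pdx χ j z') z
        - divMat (fun z' => fun i j' => ρ z' * v z' i * pdx χ j' z') z j
        - ρ z * (∑ a, pdx (fun z' => v z' a) j z * pdx χ a z)) :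
    -- conclusion: momentum-form LBEP equation
    ∀ (z : SpT) (j : Fin 3),
      pdt (fun z' => p z' j) z
        + divMat (fun z' => fun i j' =>
            dHdp H (p z', ρ z', gradx ρ z') i * p z' j'
              + dHdg H (p z', ρ z', gradx ρ z') i * gradx ρ z' j') z j =
      - pdx (fun z' =>
          ρ z' * dHdrho H (p z', ρ z', gradx ρ z')
            - ρ z' * divx (fun z'' => dHdg H (p z'', ρ z'', gradx ρ z'')) z'
            + (∑ k, p z' k * dHdp H (p z', ρ z', gradx ρ z') k)
            - H (p z', ρ z', gradx ρ z')) j z := by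
  intro z j
  have hv' : ∀ z', dHdp H (p z', ρ z', gradx ρ z') = v z' := fun z' => by rw [hv]
  simp only [pdt_eq, pdx_eq, divx_eq, divMat_eq, gradx_apply, hv'] at hcont hchi hmom ⊢
  -- smoothness facts
  have hpk : ∀ k : Fin 3, ContDiff ℝ (⊤ : ℕ∞) (fun z' => p z' k) := fun k => contDiff_pi.mp hp k
  have hVi : ∀ i : Fin 3, ContDiff ℝ (⊤ : ℕ∞) (fun z' => v z' i) := by
    intro i; simp only [hv]; exact smooth_comp (smooth_dHdp hH i) hp hρ
  have hHR : ContDiff ℝ (⊤ : ℕ∞) (fun z' => dHdrho H (p z', ρ z', gradx ρ z')) :=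
    smooth_comp (smooth_dHdrho hH) hp hρ
  have hGg : ∀ i : Fin 3, ContDiff ℝ (⊤ : ℕ∞) (fun z' => dHdg H (p z', ρ z', gradx ρ z') i) :=
    fun i => smooth_comp (smooth_dHdg hH i) hp hρ
  have hDg : ContDiff ℝ (⊤ : ℕ∞) (fun z' => ∑ i : Fin 3,
      fderiv ℝ (fun z'' => dHdg H (p z'', ρ z'', gradx ρ z'') i) z' (Xi i)) :=
    ContDiff.sum fun i _ => contDiff_pd (hGg i) (Xi i)
  have hHf : ContDiff ℝ (⊤ : ℕ∞) (fun z' => H (p z', ρ z', gradx ρ z')) := smooth_comp hH hp hρ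
  have hχi : ∀ w : SpT, ContDiff ℝ (⊤ : ℕ∞) (fun z' => fderiv ℝ χ z' w) := fun w => contDiff_pd hχ w
  have hρi : ∀ w : SpT, ContDiff ℝ (⊤ : ℕ∞) (fun z' => fderiv ℝ ρ z' w) := fun w => contDiff_pd hρ w
  have hS3 : ContDiff ℝ (⊤ : ℕ∞) (fun z' => ∑ x : Fin 3, p z' x * v z' x) :=
    ContDiff.sum fun x _ => (hpk x).mul (hVi x)
  -- (1) differentiate the χ-equation in direction Xi j
  have key1 : fderiv ℝ (fun z' => fderiv ℝ χ z' (Xi j)) z Tt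
      + (∑ x : Fin 3, v z x * fderiv ℝ (fun z' => fderiv ℝ χ z' (Xi j)) z (Xi x))
      + (∑ x : Fin 3, fderiv ℝ χ z (Xi x) * fderiv ℝ (fun z' => v z' x) z (Xi j))
      = fderiv ℝ (fun z' => dHdrho H (p z', ρ z', gradx ρ z')) z (Xi j)
        - fderiv ℝ (fun z' => ∑ i : Fin 3,
            fderiv ℝ (fun z'' => dHdg H (p z'', ρ z'', gradx ρ z'') i) z' (Xi i)) z (Xi j) := by
    have h0 : fderiv ℝ (fun z' => fderiv ℝ χ z' Tt
          + ∑ x : Fin 3, v z' x * fderiv ℝ χ z' (Xi x)) z (Xi j)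
        = fderiv ℝ (fun z' => dHdrho H (p z', ρ z', gradx ρ z')
            - ∑ i : Fin 3,
              fderiv ℝ (fun z'' => dHdg H (p z'', ρ z'', gradx ρ z'') i) z' (Xi i)) z (Xi j) :=
      congrArg (fun f => fderiv ℝ f z (Xi j)) (funext fun z' => hchi z')
    rw [pd_add (hχi Tt) (ContDiff.sum fun x _ => (hVi x).mul (hχi (Xi x))),
        pd_sum Finset.univ (fun x => fun z' => v z' x * fderiv ℝ χ z' (Xi x))
          (fun x => (hVi x).mul (hχi (Xi x))),
        pd_sub hHR hDg, pd_comm hχ z Tt (Xi j)] at h0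
    rw [show (∑ x : Fin 3, fderiv ℝ (fun z' => v z' x * fderiv ℝ χ z' (Xi x)) z (Xi j))
        = (∑ x : Fin 3, v z x * fderiv ℝ (fun z' => fderiv ℝ χ z' (Xi j)) z (Xi x))
          + ∑ x : Fin 3, fderiv ℝ χ z (Xi x) * fderiv ℝ (fun z' => v z' x) z (Xi j) from by
      rw [← Finset.sum_add_distrib]
      exact Finset.sum_congr rfl fun x _ => by
        rw [pd_mul (hVi x) (hχi (Xi x)), pd_comm hχ z (Xi x) (Xi j)]] at h0
    linarith [h0]
  -- (2) rework the h-variation equation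
  have hmom' : fderiv ℝ (fun z' => p z' j) z Tt
      + (∑ i : Fin 3, fderiv ℝ (fun z' => v z' i * p z' j) z (Xi i))
      + (∑ x : Fin 3, fderiv ℝ (fun z' => v z' x) z (Xi j) * p z x)
      = -(ρ z * fderiv ℝ (fun z' => fderiv ℝ χ z' (Xi j)) z Tt)
        - fderiv ℝ χ z (Xi j) * fderiv ℝ ρ z Tt
        - ρ z * (∑ x : Fin 3, v z x * fderiv ℝ (fun z' => fderiv ℝ χ z' (Xi j)) z (Xi x))
        - fderiv ℝ χ z (Xi j)
            * (∑ i : Fin 3, fderiv ℝ (fun z' => ρ z' * v z' i) z (Xi i))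
        - ρ z * ∑ x : Fin 3, fderiv ℝ (fun z' => v z' x) z (Xi j) * fderiv ℝ χ z (Xi x) := by
    have h0 := hmom z j
    rw [pd_mul hρ (hχi (Xi j))] at h0
    rw [show (∑ i : Fin 3,
          fderiv ℝ (fun z' => ρ z' * v z' i * fderiv ℝ χ z' (Xi j)) z (Xi i))
        = (∑ i : Fin 3, ρ z * (v z i * fderiv ℝ (fun z' => fderiv ℝ χ z' (Xi j)) z (Xi i)))
          + ∑ i : Fin 3, fderiv ℝ χ z (Xi j)
              * fderiv ℝ (fun z' => ρ z' * v z' i) z (Xi i) from by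
      rw [← Finset.sum_add_distrib]
      exact Finset.sum_congr rfl fun i _ => by
        rw [pd_mul (hρ.mul (hVi i)) (hχi (Xi j))]; ring] at h0
    rw [← Finset.mul_sum, ← Finset.mul_sum] at h0
    linarith [h0]
  have hcontχ : fderiv ℝ χ z (Xi j) * fderiv ℝ ρ z Tt
      + fderiv ℝ χ z (Xi j)
          * (∑ i : Fin 3, fderiv ℝ (fun z' => ρ z' * v z' i) z (Xi i)) = 0 := by
    rw [← mul_add, hcont z, mul_zero]
  have key1ρ : ρ z * (fderiv ℝ (fun z' => fderiv ℝ χ z' (Xi j)) z Tt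
      + (∑ x : Fin 3, v z x * fderiv ℝ (fun z' => fderiv ℝ χ z' (Xi j)) z (Xi x))
      + (∑ x : Fin 3, fderiv ℝ χ z (Xi x) * fderiv ℝ (fun z' => v z' x) z (Xi j)))
      = ρ z * (fderiv ℝ (fun z' => dHdrho H (p z', ρ z', gradx ρ z')) z (Xi j)
        - fderiv ℝ (fun z' => ∑ i : Fin 3,
            fderiv ℝ (fun z'' => dHdg H (p z'', ρ z'', gradx ρ z'') i) z' (Xi i)) z (Xi j)) := by
    rw [key1]
  -- (3) expand the divergence sum on the goal's left-hand side
  have G1 : (∑ i : Fin 3, fderiv ℝ (fun z' => v z' i * p z' j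
        + dHdg H (p z', ρ z', gradx ρ z') i * fderiv ℝ ρ z' (Xi j)) z (Xi i))
      = (∑ i : Fin 3, fderiv ℝ (fun z' => v z' i * p z' j) z (Xi i))
        + ((∑ i : Fin 3, dHdg H (p z, ρ z, gradx ρ z) i
              * fderiv ℝ (fun z' => fderiv ℝ ρ z' (Xi i)) z (Xi j))
          + fderiv ℝ ρ z (Xi j)
            * ∑ i : Fin 3,
                fderiv ℝ (fun z' => dHdg H (p z', ρ z', gradx ρ z') i) z (Xi i)) := by
    rw [Finset.mul_sum, ← Finset.sum_add_distrib, ← Finset.sum_add_distrib]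
    exact Finset.sum_congr rfl fun i _ => by
      rw [pd_add ((hVi i).mul (hpk j)) ((hGg i).mul (hρi (Xi j))),
          pd_mul (hGg i) (hρi (Xi j)), pd_comm hρ z (Xi j) (Xi i)]
  -- (4) expand the goal's right-hand side
  have G2 : fderiv ℝ (fun z' =>
        ρ z' * dHdrho H (p z', ρ z', gradx ρ z')
          - ρ z' * ∑ i : Fin 3,
              fderiv ℝ (fun z'' => dHdg H (p z'', ρ z'', gradx ρ z'') i) z' (Xi i)
          + ∑ x : Fin 3, p z' x * v z' x
          - H (p z', ρ z', gradx ρ z')) z (Xi j)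
      = (ρ z * fderiv ℝ (fun z' => dHdrho H (p z', ρ z', gradx ρ z')) z (Xi j)
          + dHdrho H (p z, ρ z, gradx ρ z) * fderiv ℝ ρ z (Xi j))
        - (ρ z * fderiv ℝ (fun z' => ∑ i : Fin 3,
              fderiv ℝ (fun z'' => dHdg H (p z'', ρ z'', gradx ρ z'') i) z' (Xi i)) z (Xi j)
          + (∑ i : Fin 3,
              fderiv ℝ (fun z' => dHdg H (p z', ρ z', gradx ρ z') i) z (Xi i))
            * fderiv ℝ ρ z (Xi j))
        + ((∑ x : Fin 3, p z x * fderiv ℝ (fun z' => v z' x) z (Xi j))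
          + ∑ x : Fin 3, v z x * fderiv ℝ (fun z' => p z' x) z (Xi j))
        - ((∑ x : Fin 3, fderiv ℝ (fun z' => p z' x) z (Xi j) * v z x)
          + fderiv ℝ ρ z (Xi j) * dHdrho H (p z, ρ z, gradx ρ z)
          + ∑ x : Fin 3, fderiv ℝ (fun z' => fderiv ℝ ρ z' (Xi x)) z (Xi j)
              * dHdg H (p z, ρ z, gradx ρ z) x) := by
    have g4 := pd_comp hH hp hρ z (Xi j)
    simp only [hv'] at g4
    rw [pd_sub (((hρ.mul hHR).sub (hρ.mul hDg)).add hS3) hHf,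
        pd_add ((hρ.mul hHR).sub (hρ.mul hDg)) hS3,
        pd_sub (hρ.mul hHR) (hρ.mul hDg),
        pd_mul hρ hHR, pd_mul hρ hDg,
        pd_sum Finset.univ (fun x => fun z' => p z' x * v z' x)
          (fun x => (hpk x).mul (hVi x)),
        show (∑ x : Fin 3, fderiv ℝ (fun z' => p z' x * v z' x) z (Xi j))
          = (∑ x : Fin 3, p z x * fderiv ℝ (fun z' => v z' x) z (Xi j))
            + ∑ x : Fin 3, v z x * fderiv ℝ (fun z' => p z' x) z (Xi j) from by
          rw [← Finset.sum_add_distrib]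
          exact Finset.sum_congr rfl fun x _ => pd_mul (hpk x) (hVi x) z (Xi j),
        g4]
  -- (5) commutation of sums
  have m1 : (∑ x : Fin 3, fderiv ℝ (fun z' => v z' x) z (Xi j) * p z x)
      = ∑ x : Fin 3, p z x * fderiv ℝ (fun z' => v z' x) z (Xi j) :=
    Finset.sum_congr rfl fun x _ => mul_comm _ _
  have m2 : (∑ x : Fin 3, fderiv ℝ (fun z' => p z' x) z (Xi j) * v z x)
      = ∑ x : Fin 3, v z x * fderiv ℝ (fun z' => p z' x) z (Xi j) :=
    Finset.sum_congr rfl fun x _ => mul_comm _ _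
  have m3 : (∑ x : Fin 3, fderiv ℝ (fun z' => fderiv ℝ ρ z' (Xi x)) z (Xi j)
        * dHdg H (p z, ρ z, gradx ρ z) x)
      = ∑ x : Fin 3, dHdg H (p z, ρ z, gradx ρ z) x
        * fderiv ℝ (fun z' => fderiv ℝ ρ z' (Xi x)) z (Xi j) :=
    Finset.sum_congr rfl fun x _ => mul_comm _ _
  have m7 : (∑ x : Fin 3, fderiv ℝ χ z (Xi x) * fderiv ℝ (fun z' => v z' x) z (Xi j))
      = ∑ x : Fin 3, fderiv ℝ (fun z' => v z' x) z (Xi j) * fderiv ℝ χ z (Xi x) :=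
    Finset.sum_congr rfl fun x _ => mul_comm _ _
  have m7ρ : ρ z * (∑ x : Fin 3, fderiv ℝ χ z (Xi x) * fderiv ℝ (fun z' => v z' x) z (Xi j))
      = ρ z * ∑ x : Fin 3, fderiv ℝ (fun z' => v z' x) z (Xi j) * fderiv ℝ χ z (Xi x) := by
    rw [m7]
  rw [G1, G2]
  linarith [hmom', key1ρ, hcontχ, m1, m2, m3, m7ρ]
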